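/- Let g be a 3-Lie algebra and N a Nijenhuis operator with [Nx₁, Nx₂, Nx₃] = 0. Then for any polynomial P(X) = Σ_{i=1}^{n} cᵢ Xⁱ with zero constant term, the operator P(N) is also a Nijenhuis operator. -/

import Mathlib

/-- Deformation of a trilinear bracket `μ` by a linear operator `M`:
`μ_M(x₁,x₂,x₃) = μ(Mx₁,x₂,x₃) + μ(x₁,Mx₂,x₃) + μ(x₁,x₂,Mx₃) − M μ(x₁,x₂,x₃)`. -/
def deform {K : Type*} [Field K] {g : Type*} [AddCommGroup g] [Module K g]
    (M : Module.End K g) (μ : g → g → g → g) : g → g → g → g :=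
  fun x y z => μ (M x) y z + μ x (M y) z + μ x y (M z) - M (μ x y z)

/-- `N` is a Nijenhuis operator for the 3-Lie bracket `b`: conditions (17) and (15). -/
def IsNijenhuis {K : Type*} [Field K] {g : Type*} [AddCommGroup g] [Module K g]
    (b : g →ₗ[K] g →ₗ[K] g →ₗ[K] g) (N : Module.End K g) : Prop :=
  (∀ x y z, N (deform N (fun u v w => b u v w) x y z)
      = b (N x) (N y) z + b (N x) y (N z) + b x (N y) (N z))
  ∧ (∀ x y z, b (N x) (N y) (N z) = 0)

/-!
Let `W, X₁, X₂, X₃` be the commuting operators on trilinear maps given by composing with `N`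
after the bracket or in one of its three slots. The two Nijenhuis conditions say that the bracket
is annihilated by `W (X₁ + X₂ + X₃) - W² - (X₁X₂ + X₁X₃ + X₂X₃)` and by `X₁X₂X₃`, and the
operators attached to `P(N)` are `P(W), P(X₁), P(X₂), P(X₃)`. So it suffices to show that in a
commutative ring the relations `w² = e₁ w - e₂` and `xyz = 0` (with `eᵢ` the elementary
symmetric functions of `x, y, z`) persist when `w, x, y, z` are replaced by their images under `P`.
Since `t (t² - e₁ t + e₂) = (t - x)(t - y)(t - z) + xyz`, all four of `w, x, y, z` are roots of
`X (X² - e₁ X + e₂)`, so `P`, being divisible by `X`, agrees at all of them with one polynomial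
`X (γ + δ X)`; for polynomials of this shape the relations are a direct identity.
-/

open Polynomial

section Defect

variable {A : Type*}

def nijenhuisDefect [Ring A] (w x y z : A) : A :=
  w * (x + y + z) - w * w - (x * y + x * z + y * z)

theorem map_nijenhuisDefect [Ring A] {B F : Type*} [Ring B] [FunLike F A B] [RingHomClass F A B]
    (f : F) (w x y z : A) :
    f (nijenhuisDefect w x y z) = nijenhuisDefect (f w) (f x) (f y) (f z) := by
  simp only [nijenhuisDefect, map_sub, map_add, map_mul]

variable [CommRing A]

theorem nijenhuisDefect_mul_linear_eq_zero (γ δ : A) {w x y z : A}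
    (h : nijenhuisDefect w x y z = 0) (hxyz : x * y * z = 0) :
    nijenhuisDefect (w * (γ + δ * w)) (x * (γ + δ * x)) (y * (γ + δ * y)) (z * (γ + δ * z))
      = 0 := by
  unfold nijenhuisDefect at *
  -- Modulo `h`, `w (γ + δ w) = α + β w` with `α = -δ e₂`, `β = γ + δ e₁`. Modulo `xyz`, the new
  -- `x, y, z` have sum `2α + β e₁` and pairwise-product sum `α² + αβ e₁ + β² e₂`: the trace and
  -- norm of `α + β w`, whose characteristic polynomial `α + β w` then satisfies.
  linear_combination ((γ + δ * (x + y + z)) ^ 2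
    - δ * ((x * (γ + δ * x) + y * (γ + δ * y) + z * (γ + δ * z)) - 2 * w * (γ + δ * w)
      - δ * (w * (x + y + z) - w * w - (x * y + x * z + y * z)))) * h
    + (3 * γ * δ + 2 * δ ^ 2 * (x + y + z)) * hxyz

variable {K : Type*} [CommRing K] [Algebra K A]

theorem exists_aeval_eq_mul_linear (s p : A) {P : K[X]} (hP : P.coeff 0 = 0) :
    ∃ γ δ : A, ∀ r : A, r * (r ^ 2 - s * r + p) = 0 → aeval r P = r * (γ + δ * r) := by
  nontriviality A
  have hq : (X ^ 2 - C s * X + C p : A[X]).Monic := by monicity!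
  have hdeg : (X ^ 2 - C s * X + C p : A[X]).degree = 2 := by compute_degree!
  set q : A[X] := X ^ 2 - C s * X + C p
  set R := P.divX.map (algebraMap K A)
  have hrem : (R %ₘ q).degree ≤ 1 := by
    have := degree_modByMonic_lt R hq
    rw [hdeg] at this
    exact Order.le_of_lt_succ this
  refine ⟨(R %ₘ q).coeff 0, (R %ₘ q).coeff 1, fun r hr => ?_⟩
  have hPX : P = X * P.divX := by simpa [hP] using (X_mul_divX_add P).symm
  have hR := congrArg (eval r) (modByMonic_add_div R q)
  rw [eq_X_add_C_of_degree_le_one hrem] at hR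
  rw [hPX, map_mul, aeval_X, ← eval_map_algebraMap, ← hR]
  have hqr : eval r q = r ^ 2 - s * r + p := by simp [q]
  simp only [eval_add, eval_mul, eval_C, eval_X, hqr]
  linear_combination (eval r (R /ₘ q)) * hr

theorem nijenhuisDefect_aeval_eq_zero {w x y z : A} (h : nijenhuisDefect w x y z = 0)
    (hxyz : x * y * z = 0) {P : K[X]} (hP : P.coeff 0 = 0) :
    nijenhuisDefect (aeval w P) (aeval x P) (aeval y P) (aeval z P) = 0 := by
  obtain ⟨γ, δ, hPr⟩ := exists_aeval_eq_mul_linear (x + y + z) (x * y + x * z + y * z) hP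
  rw [hPr w (by unfold nijenhuisDefect at h; linear_combination (-w) * h), hPr x (by linear_combination hxyz),
    hPr y (by linear_combination hxyz), hPr z (by linear_combination hxyz)]
  exact nijenhuisDefect_mul_linear_eq_zero γ δ h hxyz

theorem aeval_mul_aeval_mul_aeval_eq_zero {x y z : A} (hxyz : x * y * z = 0) {P : K[X]}
    (hP : P.coeff 0 = 0) : aeval x P * aeval y P * aeval z P = 0 := by
  rw [← X_dvd_iff] at hP
  obtain ⟨Q, rfl⟩ := hP
  simp only [map_mul, aeval_X]
  linear_combination (aeval x Q * aeval y Q * aeval z Q) * hxyz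

theorem nijenhuisDefect_aeval_mem {I : Ideal A} {w x y z : A}
    (h : nijenhuisDefect w x y z ∈ I) (hxyz : x * y * z ∈ I) {P : K[X]} (hP : P.coeff 0 = 0) :
    nijenhuisDefect (aeval w P) (aeval x P) (aeval y P) (aeval z P) ∈ I ∧
      aeval x P * aeval y P * aeval z P ∈ I := by
  let π := Ideal.Quotient.mkₐ K I
  have hπ : ∀ a, π a = 0 ↔ a ∈ I := fun a => Ideal.Quotient.eq_zero_iff_mem
  rw [← hπ, map_nijenhuisDefect] at h
  rw [← hπ, map_mul, map_mul] at hxyz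
  rw [← hπ, ← hπ, map_nijenhuisDefect, map_mul, map_mul]
  simp only [← aeval_algHom_apply]
  exact ⟨nijenhuisDefect_aeval_eq_zero h hxyz hP, aeval_mul_aeval_mul_aeval_eq_zero hxyz hP⟩

end Defect

open scoped IsMulCommutative in
theorem nijenhuisDefect_aeval_mem_of_commute {K S : Type*} [CommRing K] [Ring S] [Algebra K S]
    {w x y z : S}
    (hcomm : ∀ a ∈ ({w, x, y, z} : Set S), ∀ b ∈ ({w, x, y, z} : Set S), a * b = b * a)
    {I : Ideal S} (h : nijenhuisDefect w x y z ∈ I) (hxyz : x * y * z ∈ I)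
    {P : K[X]} (hP : P.coeff 0 = 0) :
    nijenhuisDefect (aeval w P) (aeval x P) (aeval y P) (aeval z P) ∈ I ∧
      aeval x P * aeval y P * aeval z P ∈ I := by
  have := Algebra.isMulCommutative_adjoin K hcomm
  set C := Algebra.adjoin K {w, x, y, z}
  have mem (a) (ha : a ∈ ({w, x, y, z} : Set S)) : a ∈ C := Algebra.subset_adjoin ha
  have hC := nijenhuisDefect_aeval_mem (K := K) (I := I.comap C.val)
    (w := ⟨w, mem w (by simp)⟩) (x := ⟨x, mem x (by simp)⟩) (y := ⟨y, mem y (by simp)⟩)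
    (z := ⟨z, mem z (by simp)⟩) (by simpa [map_nijenhuisDefect] using h) (by simpa using hxyz) hP
  simpa [map_nijenhuisDefect, aeval_subalgebra_coe] using hC

theorem aeval_algHom_op_apply {R A B : Type*} [CommSemiring R] [Semiring A] [Semiring B]
    [Algebra R A] [Algebra R B] (f : Aᵐᵒᵖ →ₐ[R] B) (a : A) (p : R[X]) :
    aeval (f (.op a)) p = f (.op (aeval a p)) := by
  rw [aeval_algHom_apply, aeval_op_apply]

section Trilinear

variable (K : Type*) [CommRing K]

def precompAlgHom (M Q : Type*) [AddCommGroup M] [Module K M] [AddCommGroup Q] [Module K Q] :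
    (Module.End K M)ᵐᵒᵖ →ₐ[K] Module.End K (M →ₗ[K] Q) where
  toFun A := LinearMap.lcomp K Q A.unop
  map_one' := rfl
  map_mul' _ _ := rfl
  map_zero' := by ext; simp
  map_add' _ _ := by ext; simp
  commutes' _ := by ext; simp

variable (g : Type*) [AddCommGroup g] [Module K g]

def trilinearPostcomp : Module.End K g →ₐ[K] Module.End K (g →ₗ[K] g →ₗ[K] g →ₗ[K] g) :=
  (Algebra.lsmul K K (g →ₗ[K] g →ₗ[K] g →ₗ[K] g)).comp
    ((Algebra.lsmul K K (g →ₗ[K] g →ₗ[K] g)).comp (Algebra.lsmul K K (g →ₗ[K] g)))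

def trilinearPrecomp₁ : (Module.End K g)ᵐᵒᵖ →ₐ[K] Module.End K (g →ₗ[K] g →ₗ[K] g →ₗ[K] g) :=
  precompAlgHom K g (g →ₗ[K] g →ₗ[K] g)

def trilinearPrecomp₂ : (Module.End K g)ᵐᵒᵖ →ₐ[K] Module.End K (g →ₗ[K] g →ₗ[K] g →ₗ[K] g) :=
  (Algebra.lsmul K K (g →ₗ[K] g →ₗ[K] g →ₗ[K] g)).comp (precompAlgHom K g (g →ₗ[K] g))

def trilinearPrecomp₃ : (Module.End K g)ᵐᵒᵖ →ₐ[K] Module.End K (g →ₗ[K] g →ₗ[K] g →ₗ[K] g) :=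
  (Algebra.lsmul K K (g →ₗ[K] g →ₗ[K] g →ₗ[K] g)).comp
    ((Algebra.lsmul K K (g →ₗ[K] g →ₗ[K] g)).comp (precompAlgHom K g g))

variable {K g}

-- instance search alone fails here: matching the `AddCommMonoid` structure of the triply nested
-- `LinearMap` type against the one coming from `AddCommGroup` exceeds its unification depth
instance : Ring (Module.End K (g →ₗ[K] g →ₗ[K] g →ₗ[K] g)) :=
  @Module.End.instRing K _ _ LinearMap.addCommGroup _

theorem trilinearComp_commute (N : Module.End K g) :
    ∀ a ∈ ({trilinearPostcomp K g N, trilinearPrecomp₁ K g (.op N),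
        trilinearPrecomp₂ K g (.op N), trilinearPrecomp₃ K g (.op N)} : Set _),
      ∀ b ∈ ({trilinearPostcomp K g N, trilinearPrecomp₁ K g (.op N),
        trilinearPrecomp₂ K g (.op N), trilinearPrecomp₃ K g (.op N)} : Set _),
      a * b = b * a := by
  simp only [Set.mem_insert_iff, Set.mem_singleton_iff]
  rintro a (rfl | rfl | rfl | rfl) b (rfl | rfl | rfl | rfl) <;> ext <;> rfl

theorem nijenhuisDefect_trilinearComp_apply (N : Module.End K g)
    (T : g →ₗ[K] g →ₗ[K] g →ₗ[K] g) (x y z : g) :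
    nijenhuisDefect (trilinearPostcomp K g N) (trilinearPrecomp₁ K g (.op N))
        (trilinearPrecomp₂ K g (.op N)) (trilinearPrecomp₃ K g (.op N)) T x y z =
      N (T (N x) y z + T x (N y) z + T x y (N z)) - N (N (T x y z))
        - (T (N x) (N y) z + T (N x) y (N z) + T x (N y) (N z)) :=
  rfl

theorem trilinearPrecomp_mul_apply (N : Module.End K g)
    (T : g →ₗ[K] g →ₗ[K] g →ₗ[K] g) (x y z : g) :
    (trilinearPrecomp₁ K g (.op N) * trilinearPrecomp₂ K g (.op N) *
      trilinearPrecomp₃ K g (.op N)) T x y z = T (N x) (N y) (N z) :=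
  rfl

end Trilinear

theorem isNijenhuis_iff_nijenhuisDefect {K g : Type*} [Field K] [AddCommGroup g] [Module K g]
    (b : g →ₗ[K] g →ₗ[K] g →ₗ[K] g) (N : Module.End K g) :
    IsNijenhuis b N ↔
      nijenhuisDefect (trilinearPostcomp K g N) (trilinearPrecomp₁ K g (.op N))
          (trilinearPrecomp₂ K g (.op N)) (trilinearPrecomp₃ K g (.op N)) b = 0 ∧
        (trilinearPrecomp₁ K g (.op N) * trilinearPrecomp₂ K g (.op N) *
          trilinearPrecomp₃ K g (.op N)) b = 0 := by
  simp only [IsNijenhuis, deform, LinearMap.ext_iff, nijenhuisDefect_trilinearComp_apply,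
    trilinearPrecomp_mul_apply, LinearMap.zero_apply, sub_eq_zero, map_sub]

theorem threeLie_nijenhuis_polynomial_general
    {K : Type*} [Field K] {g : Type*} [AddCommGroup g] [Module K g]
    (b : g →ₗ[K] g →ₗ[K] g →ₗ[K] g)
    (N : Module.End K g) (hN : IsNijenhuis b N)
    (P : Polynomial K) (hP : P.coeff 0 = 0) :
    IsNijenhuis b (Polynomial.aeval N P) := by
  have mem_annihilator (f : Module.End K (g →ₗ[K] g →ₗ[K] g →ₗ[K] g)) :
      f ∈ LinearMap.ker (LinearMap.toSpanSingleton _ _ b) ↔ f b = 0 := Iff.rfl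
  rw [isNijenhuis_iff_nijenhuisDefect, ← mem_annihilator, ← mem_annihilator] at hN ⊢
  have h := nijenhuisDefect_aeval_mem_of_commute (trilinearComp_commute N) hN.1 hN.2 hP
  rwa [aeval_algHom_apply, aeval_algHom_op_apply, aeval_algHom_op_apply,
    aeval_algHom_op_apply] at h

/-- Corollary 4.10: for a Nijenhuis operator `N` and any polynomial
`P(X) = Σ_{i=1}^n cᵢ Xⁱ` with zero constant term, `P(N)` is also a Nijenhuis operator. -/
theorem threeLie_nijenhuis_polynomial
    {K : Type*} [Field K] {g : Type*} [AddCommGroup g] [Module K g]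
    (b : g →ₗ[K] g →ₗ[K] g →ₗ[K] g)
    (hb1 : ∀ x y z, b x y z = - b y x z)
    (hb2 : ∀ x y z, b x y z = - b x z y)
    (hfi : ∀ x₁ x₂ y₁ y₂ y₃, b x₁ x₂ (b y₁ y₂ y₃)
      = b (b x₁ x₂ y₁) y₂ y₃ + b y₁ (b x₁ x₂ y₂) y₃ + b y₁ y₂ (b x₁ x₂ y₃))
    (N : Module.End K g) (hN : IsNijenhuis b N)
    (P : Polynomial K) (hP : P.coeff 0 = 0) :
    IsNijenhuis b (Polynomial.aeval N P) :=
  threeLie_nijenhuis_polynomial_general b N hN P hP
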